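/- arXiv:1808.03181 — 4 statements merged into one kernel-verified Lean document; each statement's English description precedes it below -/
import Mathlib

section
/- For finitely supported uniform measures μ = (1/n)∑δ_{x_i} and ν = (1/n)∑δ_{y_i} on a compact metric space X, the optimal matching distance δ(μ,ν) = inf{r | for all Borel U, μ(U) ≤ ν(U_r) and ν(U) ≤ μ(U_r)} (where U_r is the open r-neighbourhood of U) equals min over permutations σ ∈ S_n of max_{1≤i≤n} d(x_i, y_{σ(i)}). -/
open MeasureTheory Metric
open scoped ENNReal

/-- The optimal matching distance between two Borel measures. -/
noncomputable def matchDist {X : Type*} [PseudoMetricSpace X] [MeasurableSpace X]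
    (μ ν : Measure X) : ℝ :=
  sInf {r : ℝ | ∀ U : Set X, MeasurableSet U →
    μ U ≤ ν (Metric.thickening r U) ∧ ν U ≤ μ (Metric.thickening r U)}

/-!
Hall's marriage theorem turns the condition `μ(U) ≤ ν(U_r)` for all finite `U ⊆ {x_i}` into a
perfect matching `σ` with `d(x_i, y_{σ i}) < r`; conversely such a matching maps the points of `U`
injectively into `U_r`. Hence the set of admissible `r` is exactly the open ray above
`min_σ max_i d(x_i, y_{σ i})`, whose infimum is this minimum. The condition with `μ` and `ν`
swapped adds nothing, as `σ⁻¹` matches the `y_j` to the `x_i` equally well.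
-/

section

open Finset
open scoped Classical

variable {ι X : Type*}

theorem Equiv.Perm.exists_forall_rel_of_hall [Fintype ι] (R : ι → ι → Prop)
    (hall : ∀ A : Finset ι, #A ≤ #{j | ∃ i ∈ A, R i j}) :
    ∃ σ : Equiv.Perm ι, ∀ i, R i (σ i) := by
  obtain ⟨f, hf, hR⟩ := (Fintype.all_card_le_filter_rel_iff_exists_injective R).1 hall
  exact ⟨Equiv.ofBijective f (Finite.injective_iff_bijective.1 hf), hR⟩

theorem ciSup_lt_iff_of_finite [Finite ι] [Nonempty ι] {f : ι → ℝ} {r : ℝ} :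
    ⨆ i, f i < r ↔ ∀ i, f i < r := by
  refine ⟨fun h i => (le_ciSup (Finite.bddAbove_range f) i).trans_lt h, fun h => ?_⟩
  obtain ⟨i, hi⟩ := exists_eq_ciSup_of_finite (f := f)
  exact hi ▸ h i

section PseudoMetric

variable [PseudoMetricSpace X] {x y : ι → X} {r : ℝ}

theorem card_le_card_thickening_of_perm [Fintype ι] {σ : Equiv.Perm ι}
    (hσ : ∀ i, dist (x i) (y (σ i)) < r) (U : Set X) :
    #{i | x i ∈ U} ≤ #{j | y j ∈ thickening r U} := by
  refine card_le_card_of_injOn σ (fun i hi => ?_) σ.injective.injOn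
  simp only [coe_filter, mem_univ, true_and, Set.mem_ofPred_eq] at hi ⊢
  exact mem_thickening_iff.2 ⟨x i, hi, dist_comm (x i) _ ▸ hσ i⟩

theorem exists_perm_dist_lt_symm :
    (∃ σ : Equiv.Perm ι, ∀ i, dist (x i) (y (σ i)) < r) →
      ∃ σ : Equiv.Perm ι, ∀ j, dist (y j) (x (σ j)) < r := by
  rintro ⟨σ, hσ⟩
  exact ⟨σ.symm, fun j => by simpa [dist_comm] using hσ (σ.symm j)⟩

variable [MeasurableSpace X] [MeasurableSingletonClass X]

theorem forall_card_le_card_thickening_iff_exists_perm [Fintype ι] :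
    (∀ U : Set X, MeasurableSet U → #{i | x i ∈ U} ≤ #{j | y j ∈ thickening r U}) ↔
      ∃ σ : Equiv.Perm ι, ∀ i, dist (x i) (y (σ i)) < r := by
  refine ⟨fun h => Equiv.Perm.exists_forall_rel_of_hall (fun i j => dist (x i) (y j) < r)
    fun A => ?_, fun ⟨σ, hσ⟩ U _ => card_le_card_thickening_of_perm hσ U⟩
  have hA := h (x '' A) (A.finite_toSet.image x).measurableSet
  have hthick : ∀ j, y j ∈ thickening r (x '' A) ↔ ∃ i ∈ A, dist (x i) (y j) < r := by
    simp [mem_thickening_iff, dist_comm]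
  calc #A ≤ #{i | x i ∈ x '' A} := card_le_card fun i hi => by simpa using ⟨i, hi, rfl⟩
    _ ≤ #{j | y j ∈ thickening r (x '' A)} := hA
    _ = #{j | ∃ i ∈ A, dist (x i) (y j) < r} := by simp only [hthick]

end PseudoMetric

section Measure

variable [MeasurableSpace X] [MeasurableSingletonClass X]

theorem MeasureTheory.Measure.sum_dirac_apply_eq_card [Fintype ι] (x : ι → X) (U : Set X) :
    (∑ i, Measure.dirac (x i)) U = #{i | x i ∈ U} := by
  simp [Measure.coe_finsetSum, Measure.dirac_apply, Set.indicator_apply, Finset.sum_boole]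

theorem MeasureTheory.Measure.smul_sum_dirac_le_iff [Fintype ι] {c : ℝ≥0∞} (hc₀ : c ≠ 0)
    (hc : c ≠ ∞) (x y : ι → X) (U V : Set X) :
    (c • ∑ i, Measure.dirac (x i)) U ≤ (c • ∑ i, Measure.dirac (y i)) V ↔
      #{i | x i ∈ U} ≤ #{i | y i ∈ V} := by
  simp only [Measure.smul_apply, Measure.sum_dirac_apply_eq_card, smul_eq_mul,
    ENNReal.mul_le_mul_iff_right hc₀ hc, Nat.cast_le]

end Measure

end

theorem stmt0_general {X : Type*} [MetricSpace X]
    [MeasurableSpace X] [BorelSpace X]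
    (n : ℕ) (hn : 0 < n) (x y : Fin n → X) :
    matchDist
      (((n : ℝ≥0∞)⁻¹) • ∑ i, Measure.dirac (x i))
      (((n : ℝ≥0∞)⁻¹) • ∑ i, Measure.dirac (y i))
    = ⨅ σ : Equiv.Perm (Fin n), ⨆ i, dist (x i) (y (σ i)) := by
  have : Nonempty (Fin n) := ⟨⟨0, hn⟩⟩
  have hc₀ : (n : ℝ≥0∞)⁻¹ ≠ 0 := ENNReal.inv_ne_zero.2 (ENNReal.natCast_ne_top n)
  have hc : (n : ℝ≥0∞)⁻¹ ≠ ∞ := ENNReal.inv_ne_top.2 (Nat.cast_ne_zero.2 hn.ne')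
  suffices admissible : ∀ r, (∀ U : Set X, MeasurableSet U →
      (((n : ℝ≥0∞)⁻¹) • ∑ i, Measure.dirac (x i)) U ≤
        (((n : ℝ≥0∞)⁻¹) • ∑ i, Measure.dirac (y i)) (thickening r U) ∧
      (((n : ℝ≥0∞)⁻¹) • ∑ i, Measure.dirac (y i)) U ≤
        (((n : ℝ≥0∞)⁻¹) • ∑ i, Measure.dirac (x i)) (thickening r U)) ↔
      ⨅ σ : Equiv.Perm (Fin n), ⨆ i, dist (x i) (y (σ i)) < r by
    simp only [matchDist, admissible]
    exact csInf_Ioi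
  intro r
  simp only [Measure.smul_sum_dirac_le_iff hc₀ hc, forall_and,
    forall_card_le_card_thickening_iff_exists_perm,
    ciInf_lt_iff (Finite.bddBelow_range _), ciSup_lt_iff_of_finite]
  exact and_iff_left_of_imp exists_perm_dist_lt_symm

/-- For uniform finitely supported measures on a compact metric space, the optimal
matching distance equals the optimal matching of the supporting points. -/
theorem stmt0 {X : Type*} [MetricSpace X] [CompactSpace X]
    [MeasurableSpace X] [BorelSpace X]
    (n : ℕ) (hn : 0 < n) (x y : Fin n → X) :
    matchDist
      (((n : ℝ≥0∞)⁻¹) • ∑ i, Measure.dirac (x i))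
      (((n : ℝ≥0∞)⁻¹) • ∑ i, Measure.dirac (y i))
    = ⨅ σ : Equiv.Perm (Fin n), ⨆ i, dist (x i) (y (σ i)) :=
  stmt0_general n hn x y
end

section
/- On a compact metric space X, for any Borel probability measures μ, ν, the 1-Wasserstein distance satisfies W_1(μ,ν) ≤ (diam(X)+1)·δ(μ,ν), where δ is the optimal matching distance. -/
open MeasureTheory Metric
open scoped ENNReal

/-- The 1-Wasserstein (Kantorovich–Rubinstein) distance. -/
noncomputable def W1 {X : Type*} [PseudoMetricSpace X] [MeasurableSpace X]
    (μ ν : Measure X) : ℝ :=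
  ⨆ f : {f : X → ℝ // LipschitzWith 1 f}, (∫ x, f.1 x ∂μ - ∫ x, f.1 x ∂ν)

lemma aux_pos {X : Type*} [MetricSpace X] [MeasurableSpace X] [BorelSpace X]
    (μ ν : Measure X) [IsProbabilityMeasure μ] [IsProbabilityMeasure ν]
    {r : ℝ}
    (hr : ∀ U : Set X, MeasurableSet U →
      μ U ≤ ν (Metric.thickening r U) ∧ ν U ≤ μ (Metric.thickening r U)) :
    0 < r := by
  by_contra h
  push_neg at h
  have := (hr Set.univ MeasurableSet.univ).1
  rw [Metric.thickening_of_nonpos h] at this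
  simp [measure_univ] at this

lemma aux_key {X : Type*} [MetricSpace X] [CompactSpace X]
    [MeasurableSpace X] [BorelSpace X]
    (μ ν : Measure X) [IsProbabilityMeasure μ] [IsProbabilityMeasure ν]
    {r : ℝ}
    (hr : ∀ U : Set X, MeasurableSet U →
      μ U ≤ ν (Metric.thickening r U) ∧ ν U ≤ μ (Metric.thickening r U))
    (f : X → ℝ) (hf : LipschitzWith 1 f) :
    ∫ x, f x ∂μ - ∫ x, f x ∂ν ≤ r := by
  have hr0 : 0 < r := aux_pos μ ν hr
  have hXne : Nonempty X := by
    by_contra h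
    rw [not_nonempty_iff] at h
    have h1 := measure_univ (μ := μ)
    rw [Set.univ_eq_empty_iff.mpr h] at h1
    simp at h1
  have hfc : Continuous f := hf.continuous
  obtain ⟨x₀, -, hx₀⟩ := isCompact_univ.exists_isMinOn Set.univ_nonempty
    hfc.continuousOn
  set g : X → ℝ := fun x => f x - f x₀ with hg
  have hg_nn : ∀ x, 0 ≤ g x := fun x => sub_nonneg.mpr (hx₀ (Set.mem_univ x))
  have hgc : Continuous g := hfc.sub continuous_const
  have hg_lip : LipschitzWith 1 g := fun x y => by
    simp only [hg, edist_sub_right]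
    exact hf x y
  -- integrability of f
  have hint : ∀ (κ : Measure X) [IsProbabilityMeasure κ], Integrable f κ := by
    intro κ _
    exact hfc.integrable_of_hasCompactSupport (HasCompactSupport.of_compactSpace f)
  -- reduce to g
  have hred : ∀ (κ : Measure X) [IsProbabilityMeasure κ],
      ∫ x, g x ∂κ = ∫ x, f x ∂κ - f x₀ := by
    intro κ _
    rw [integral_sub (hint κ) (integrable_const _), integral_const]
    simp [measure_univ]
  -- layercake
  have L1 : ∫⁻ x, ENNReal.ofReal (g x) ∂μ = ∫⁻ t in Set.Ioi 0, μ {a | t < g a} :=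
    lintegral_eq_lintegral_meas_lt μ (ae_of_all _ hg_nn) hgc.aemeasurable
  have L2 : ∫⁻ x, ENNReal.ofReal (g x) ∂ν = ∫⁻ t in Set.Ioi 0, ν {a | t < g a} :=
    lintegral_eq_lintegral_meas_lt ν (ae_of_all _ hg_nn) hgc.aemeasurable
  -- key measure comparison
  have key : ∀ t : ℝ, μ {a | t < g a} ≤ ν {a | t - r < g a} := by
    intro t
    have hU : MeasurableSet {a | t < g a} :=
      measurableSet_lt measurable_const hgc.measurable
    refine (hr _ hU).1.trans (measure_mono ?_)
    intro y hy
    rw [Metric.mem_thickening_iff] at hy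
    obtain ⟨z, hz, hdz⟩ := hy
    have hlip : dist (g y) (g z) ≤ dist y z := by
      simpa using hg_lip.dist_le_mul y z
    have h2 : g z - g y ≤ dist y z := by
      rw [Real.dist_eq, abs_sub_comm] at hlip
      calc g z - g y ≤ |g z - g y| := le_abs_self _
        _ ≤ dist y z := hlip
    simp only [Set.mem_setOf_eq] at hz ⊢
    linarith
  -- change of variables
  have hmp : MeasurePreserving (fun x : ℝ => x + r) volume volume :=
    measurePreserving_add_right volume r
  have hemb : MeasurableEmbedding (fun x : ℝ => x + r) :=
    (MeasurableEquiv.addRight r).measurableEmbedding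
  have hpre : (fun x : ℝ => x + r) ⁻¹' Set.Ioi r = Set.Ioi 0 := by
    ext x; simp
  have hcov : ∫⁻ t in Set.Ioi r, ν {a | t - r < g a}
      = ∫⁻ t in Set.Ioi 0, ν {a | t < g a} := by
    have := hmp.setLIntegral_comp_preimage_emb hemb
      (fun t => ν {a | t - r < g a}) (Set.Ioi r)
    rw [hpre] at this
    rw [← this]
    congr 1
    funext x
    simp [add_sub_cancel_right]
  -- the main lintegral estimate
  have main : ∫⁻ x, ENNReal.ofReal (g x) ∂μ
      ≤ ENNReal.ofReal r + ∫⁻ x, ENNReal.ofReal (g x) ∂ν := by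
    rw [L1, L2]
    calc ∫⁻ t in Set.Ioi 0, μ {a | t < g a}
        ≤ ∫⁻ t in Set.Ioi 0, ν {a | t - r < g a} := lintegral_mono fun t => key t
      _ = ∫⁻ t in Set.Ioc 0 r ∪ Set.Ioi r, ν {a | t - r < g a} := by
          rw [Set.Ioc_union_Ioi_eq_Ioi hr0.le]
      _ = (∫⁻ t in Set.Ioc 0 r, ν {a | t - r < g a})
          + ∫⁻ t in Set.Ioi r, ν {a | t - r < g a} :=
          lintegral_union measurableSet_Ioi (Set.Ioc_disjoint_Ioi le_rfl)
      _ ≤ ENNReal.ofReal r + ∫⁻ t in Set.Ioi 0, ν {a | t < g a} := by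
          rw [hcov]
          gcongr
          calc ∫⁻ t in Set.Ioc 0 r, ν {a | t - r < g a}
              ≤ ∫⁻ _ in Set.Ioc 0 r, 1 := lintegral_mono fun t => prob_le_one
            _ = volume (Set.Ioc 0 r) := by simp
            _ = ENNReal.ofReal r := by rw [Real.volume_Ioc, sub_zero]
  -- finiteness
  obtain ⟨x₁, -, hx₁⟩ := isCompact_univ.exists_isMaxOn Set.univ_nonempty
    hgc.continuousOn
  have hfin : ∀ (κ : Measure X) [IsProbabilityMeasure κ],
      ∫⁻ x, ENNReal.ofReal (g x) ∂κ ≠ ⊤ := by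
    intro κ _
    have : ∫⁻ x, ENNReal.ofReal (g x) ∂κ ≤ ∫⁻ _, ENNReal.ofReal (g x₁) ∂κ :=
      lintegral_mono fun x => ENNReal.ofReal_le_ofReal (hx₁ (Set.mem_univ x))
    rw [lintegral_const, measure_univ, mul_one] at this
    exact (this.trans_lt ENNReal.ofReal_lt_top).ne
  -- convert to real integrals
  have hint_eq : ∀ (κ : Measure X) [IsProbabilityMeasure κ],
      ∫ x, g x ∂κ = (∫⁻ x, ENNReal.ofReal (g x) ∂κ).toReal := by
    intro κ _
    exact integral_eq_lintegral_of_nonneg_ae (ae_of_all _ hg_nn)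
      hgc.aestronglyMeasurable
  have hgoal : ∫ x, g x ∂μ ≤ r + ∫ x, g x ∂ν := by
    rw [hint_eq μ, hint_eq ν]
    have h1 : (∫⁻ x, ENNReal.ofReal (g x) ∂μ).toReal
        ≤ (ENNReal.ofReal r + ∫⁻ x, ENNReal.ofReal (g x) ∂ν).toReal := by
      apply ENNReal.toReal_mono _ main
      exact ENNReal.add_ne_top.mpr ⟨ENNReal.ofReal_ne_top, hfin ν⟩
    rwa [ENNReal.toReal_add ENNReal.ofReal_ne_top (hfin ν),
      ENNReal.toReal_ofReal hr0.le] at h1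
  have e1 := hred μ
  have e2 := hred ν
  linarith

/-- On a compact metric space, `W₁(μ,ν) ≤ (diam X + 1) · δ(μ,ν)`. -/
theorem stmt1 {X : Type*} [MetricSpace X] [CompactSpace X]
    [MeasurableSpace X] [BorelSpace X]
    (μ ν : Measure X) [IsProbabilityMeasure μ] [IsProbabilityMeasure ν] :
    W1 μ ν ≤ (Metric.diam (Set.univ : Set X) + 1) * matchDist μ ν := by
  have hXne : Nonempty X := by
    by_contra h
    rw [not_nonempty_iff] at h
    have h1 := measure_univ (μ := μ)
    rw [Set.univ_eq_empty_iff.mpr h] at h1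
    simp at h1
  set S := {r : ℝ | ∀ U : Set X, MeasurableSet U →
    μ U ≤ ν (Metric.thickening r U) ∧ ν U ≤ μ (Metric.thickening r U)} with hS
  have hmem : ∀ (κ₁ κ₂ : Measure X) [IsProbabilityMeasure κ₁] [IsProbabilityMeasure κ₂]
      (U : Set X), MeasurableSet U →
      κ₁ U ≤ κ₂ (Metric.thickening (Metric.diam (Set.univ : Set X) + 1) U) := by
    intro κ₁ κ₂ _ _ U _
    rcases U.eq_empty_or_nonempty with h | h
    · simp [h]
    · have : Metric.thickening (Metric.diam (Set.univ : Set X) + 1) U = Set.univ := by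
        apply Set.eq_univ_of_forall
        intro x
        rw [Metric.mem_thickening_iff]
        obtain ⟨u, hu⟩ := h
        exact ⟨u, hu, lt_of_le_of_lt
          (Metric.dist_le_diam_of_mem isCompact_univ.isBounded
            (Set.mem_univ x) (Set.mem_univ u)) (by linarith)⟩
      rw [this, measure_univ]
      exact prob_le_one
  have hSne : S.Nonempty := ⟨Metric.diam (Set.univ : Set X) + 1,
    fun U hU => ⟨hmem μ ν U hU, hmem ν μ U hU⟩⟩
  have hS0 : ∀ r ∈ S, 0 ≤ r := fun r hr => (aux_pos μ ν hr).le
  have hδ0 : 0 ≤ matchDist μ ν := Real.sInf_nonneg hS0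
  have hW : W1 μ ν ≤ matchDist μ ν := by
    apply Real.iSup_le _ hδ0
    rintro ⟨f, hf⟩
    exact le_csInf hSne fun r hr => aux_key μ ν hr f hf
  have hd : 0 ≤ Metric.diam (Set.univ : Set X) := Metric.diam_nonneg
  nlinarith
end

section
/- Fix a fully supported diffuse Borel probability measure ν on [0,1], and for each fully supported diffuse Borel probability measure μ let σ(μ) = f_μ^{-1} ∘ f_ν where f_μ(t)=μ[0,t). Then σ is 1-Lipschitz: for any two such measures μ_1, μ_2, sup_{t∈[0,1]} |σ(μ_1)(t) − σ(μ_2)(t)| ≤ δ(μ_1,μ_2), where δ is the optimal matching distance. -/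
/-! Since `μᵢ` is diffuse, `t ↦ μᵢ[0,t)` is continuous, so by the intermediate value theorem
`yᵢ = σ(μᵢ)(t)` satisfies `μ₁[0,y₁) = ν[0,t) = μ₂[0,y₂)`. If `r` is admissible for `δ(μ₁,μ₂)`,
the `r`-neighbourhood of `[0,y₁)` lies in `[0,y₁+r)`, so `μ₂[0,y₂) ≤ μ₂[0,y₁+r)`; full support
makes `s ↦ μ₂[0,s)` strictly increasing, whence `y₂ ≤ y₁ + r`, and symmetrically `y₁ ≤ y₂ + r`. -/

open MeasureTheory
open scoped unitInterval

/-- The distribution function of a measure on `[0,1]`. -/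
noncomputable def distFun (μ : Measure I) (t : I) : ℝ := (μ (Set.Iio t)).toReal

/-- The increasing rearrangement map `σ(μ) = f_μ⁻¹ ∘ f_ν`. -/
noncomputable def rearr (μ ν : Measure I) (t : I) : I :=
  Function.invFun (distFun μ) (distFun ν t)

open Set Metric

namespace MeasureTheory

variable {α : Type*} [TopologicalSpace α] [LinearOrder α] [OrderTopology α]
  [MeasurableSpace α] [OpensMeasurableSpace α] (μ : Measure α) [IsFiniteMeasure μ]

theorem continuous_measure_Iio [FirstCountableTopology α] [NullSingletonClass μ] :
    Continuous fun t ↦ μ (Iio t) := by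
  refine continuous_iff_continuousAt.2 fun t ↦ ?_
  refine tendsto_measure_of_ae_tendsto_indicator_of_isFiniteMeasure _ measurableSet_Iio
    (fun _ ↦ measurableSet_Iio) ?_
  filter_upwards [μ.ae_ne t] with x hx
  rcases hx.lt_or_gt with hxt | htx
  · filter_upwards [lt_mem_nhds hxt] with s hs using by simp [hs, hxt]
  · filter_upwards [gt_mem_nhds htx] with s hs using by simp [hs.not_gt, htx.not_gt]

theorem measure_Iio_lt_measure_Iio [DenselyOrdered α] [μ.IsOpenPosMeasure] {a b : α}
    (hab : a < b) : μ (Iio a) < μ (Iio b) := by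
  rw [← Iio_union_Ico_eq_Iio hab.le, measure_union (Iio_disjoint_Ici le_rfl |>.mono_right
    Ico_subset_Ici_self) measurableSet_Ico]
  exact ENNReal.lt_add_right (measure_ne_top _ _)
    ((Measure.measure_Ioo_pos μ).2 hab |>.trans_le (measure_mono Ioo_subset_Ico_self)).ne'

end MeasureTheory

theorem le_matchDist {X : Type*} [PseudoMetricSpace X] [BoundedSpace X] [MeasurableSpace X]
    (μ ν : Measure X) [IsProbabilityMeasure μ] [IsProbabilityMeasure ν] {a : ℝ}
    (h : ∀ r, 0 < r → (∀ U : Set X, MeasurableSet U →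
      μ U ≤ ν (thickening r U) ∧ ν U ≤ μ (thickening r U)) → a ≤ r) :
    a ≤ matchDist μ ν := by
  refine le_csInf ⟨diam (univ : Set X) + 1, fun U _ ↦ ?_⟩ fun r hr ↦ h r ?_ hr
  · rcases U.eq_empty_or_nonempty with rfl | ⟨u, hu⟩
    · simp
    have : thickening (diam (univ : Set X) + 1) U = univ :=
      eq_univ_of_forall fun x ↦ mem_thickening_iff.2 ⟨u, hu, (dist_le_diam_of_mem
        (Bornology.IsBounded.all _) (mem_univ x) (mem_univ u)).trans_lt (lt_add_one _)⟩
    simp [this, prob_le_one]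
  · by_contra! hr₀
    simpa [thickening_of_nonpos hr₀] using (hr univ MeasurableSet.univ).1

theorem continuous_distFun (μ : Measure I) [IsFiniteMeasure μ] [NullSingletonClass μ] :
    Continuous (distFun μ) :=
  ENNReal.continuousOn_toReal.comp_continuous (continuous_measure_Iio μ)
    fun _ ↦ measure_ne_top _ _

theorem Icc_subset_range_distFun (μ : Measure I) [IsProbabilityMeasure μ]
    [NullSingletonClass μ] : Icc 0 1 ⊆ range (distFun μ) := by
  have h₀ : distFun μ 0 = 0 := by simp [distFun]
  have h₁ : distFun μ 1 = 1 := by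
    have : Iic (1 : I) = univ := eq_univ_of_forall fun _ ↦ unitInterval.le_one'
    simp [distFun, measure_congr Iio_ae_eq_Iic, this]
  simpa [h₀, h₁] using intermediate_value_univ 0 1 (continuous_distFun μ)

theorem distFun_rearr (μ ν : Measure I) [IsProbabilityMeasure μ] [NullSingletonClass μ]
    [IsProbabilityMeasure ν] (t : I) : distFun μ (rearr μ ν t) = distFun ν t :=
  Function.invFun_eq <| Icc_subset_range_distFun μ ⟨measureReal_nonneg, measureReal_le_one⟩

theorem thickening_Iio_subset_Iio {r : ℝ} {x z : I} (h : (x : ℝ) + r ≤ z) :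
    thickening r (Iio x) ⊆ Iio z := by
  intro p hp
  obtain ⟨u, hu, hpu⟩ := mem_thickening_iff.1 hp
  have hu' : (u : ℝ) < x := hu
  rw [Subtype.dist_eq, Real.dist_eq, abs_lt] at hpu
  show (p : ℝ) < z
  linarith [hpu.2]

theorem sub_le_of_measure_Iio_le_measure_thickening (μ : Measure I) [IsFiniteMeasure μ]
    [μ.IsOpenPosMeasure] {r : ℝ} (hr : 0 ≤ r) {x y : I}
    (h : μ (Iio y) ≤ μ (thickening r (Iio x))) : (y : ℝ) - x ≤ r := by
  by_contra! hxy
  let z : I := ⟨(x + r + y) / 2, by constructor <;> linarith [x.2.1, y.2.2]⟩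
  have hzy : z < y := show ((x : ℝ) + r + y) / 2 < y by linarith
  have hxz : (x : ℝ) + r ≤ z := show (x : ℝ) + r ≤ (x + r + y) / 2 by linarith
  exact (h.trans (measure_mono (thickening_Iio_subset_Iio hxz))).not_gt
    (measure_Iio_lt_measure_Iio μ hzy)

theorem stmt4_general (ν μ₁ μ₂ : Measure I)
    [IsProbabilityMeasure ν] [IsProbabilityMeasure μ₁] [IsProbabilityMeasure μ₂]
    (hdiffμ₁ : ∀ x : I, μ₁ {x} = 0) (hdiffμ₂ : ∀ x : I, μ₂ {x} = 0)
    (hfullμ₁ : ∀ U : Set I, IsOpen U → U.Nonempty → 0 < μ₁ U)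
    (hfullμ₂ : ∀ U : Set I, IsOpen U → U.Nonempty → 0 < μ₂ U) :
    ∀ t : I, |(rearr μ₁ ν t : ℝ) - (rearr μ₂ ν t : ℝ)| ≤ matchDist μ₁ μ₂ := by
  intro t
  have : NullSingletonClass μ₁ := ⟨hdiffμ₁⟩
  have : NullSingletonClass μ₂ := ⟨hdiffμ₂⟩
  have : μ₁.IsOpenPosMeasure := ⟨fun U hU hne ↦ (hfullμ₁ U hU hne).ne'⟩
  have : μ₂.IsOpenPosMeasure := ⟨fun U hU hne ↦ (hfullμ₂ U hU hne).ne'⟩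
  have hsame : μ₁ (Iio (rearr μ₁ ν t)) = μ₂ (Iio (rearr μ₂ ν t)) :=
    (ENNReal.toReal_eq_toReal_iff' (measure_ne_top _ _) (measure_ne_top _ _)).1 <|
      (distFun_rearr μ₁ ν t).trans (distFun_rearr μ₂ ν t).symm
  refine le_matchDist μ₁ μ₂ fun r hr hadm ↦ abs_sub_le_iff.2 ⟨?_, ?_⟩
  · exact sub_le_of_measure_Iio_le_measure_thickening μ₁ hr.le
      (hsame ▸ (hadm _ measurableSet_Iio).2)
  · exact sub_le_of_measure_Iio_le_measure_thickening μ₂ hr.le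
      (hsame.symm ▸ (hadm _ measurableSet_Iio).1)

/-- The increasing rearrangement `μ ↦ σ(μ) = f_μ⁻¹ ∘ f_ν` is 1-Lipschitz from the
optimal matching distance to the uniform metric: for fully supported diffuse Borel
probability measures `μ₁, μ₂` on `[0,1]`,
`sup_t |σ(μ₁)(t) − σ(μ₂)(t)| ≤ δ(μ₁, μ₂)`. -/
theorem stmt4 (ν μ₁ μ₂ : Measure I)
    [IsProbabilityMeasure ν] [IsProbabilityMeasure μ₁] [IsProbabilityMeasure μ₂]
    (hdiffν : ∀ x : I, ν {x} = 0)
    (hdiffμ₁ : ∀ x : I, μ₁ {x} = 0) (hdiffμ₂ : ∀ x : I, μ₂ {x} = 0)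
    (hfullν : ∀ U : Set I, IsOpen U → U.Nonempty → 0 < ν U)
    (hfullμ₁ : ∀ U : Set I, IsOpen U → U.Nonempty → 0 < μ₁ U)
    (hfullμ₂ : ∀ U : Set I, IsOpen U → U.Nonempty → 0 < μ₂ U) :
    ∀ t : I, |(rearr μ₁ ν t : ℝ) - (rearr μ₂ ν t : ℝ)| ≤ matchDist μ₁ μ₂ :=
  stmt4_general ν μ₁ μ₂ hdiffμ₁ hdiffμ₂ hfullμ₁ hfullμ₂
end

section
/- The interval [0,1] admits continuous transport: for every pair of fully supported diffuse Borel probability measures μ, ν on [0,1], there exists a homeomorphism h of [0,1] with h_*ν = μ and sup_{x∈[0,1]} |h(x) − x| ≤ δ(μ,ν). -/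
/-!
Let `F_μ x = μ [0, x]`. Diffuseness makes `F_μ` continuous and full support makes it strictly
increasing, so `F_μ` is an increasing self-homeomorphism of `[0,1]` pushing `μ` to Lebesgue
measure; hence `h = F_μ⁻¹ ∘ F_ν` pushes `ν` to `μ`. If `μ U ≤ ν (U_r)` and `ν U ≤ μ (U_r)`
for all `U`, apply the second inequality to `U = [0, x]`: with `y = h x` we get
`μ [0, y] = ν [0, x] ≤ μ [0, x + r)`, so `y ≤ x + r` by strict monotonicity of `F_μ`;
symmetrically `x ≤ y + r`.
-/

open MeasureTheory
open scoped unitInterval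

open Set

theorem StieltjesFunction.continuous_of_nullSingletonClass {R : Type*}
    [ConditionallyCompleteLinearOrder R] [TopologicalSpace R] [OrderTopology R]
    [MeasurableSpace R] [BorelSpace R] [SecondCountableTopology R] [DenselyOrdered R]
    (f : StieltjesFunction R) [NullSingletonClass f.measure] : Continuous f := by
  refine continuous_iff_continuousAt.2 fun a => ?_
  rw [f.mono.continuousAt_iff_leftLim_eq_rightLim, f.rightLim_eq]
  have h : ENNReal.ofReal (f a - Function.leftLim f a) = 0 :=
    (f.measure_singleton a).symm.trans (NullSingletonClass.measure_singleton a)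
  rw [ENNReal.ofReal_eq_zero, sub_nonpos] at h
  exact le_antisymm (f.mono.leftLim_le le_rfl) h

namespace MeasureTheory

theorem Measure.nullSingletonClass_map {α β : Type*} [MeasurableSpace α] [MeasurableSpace β]
    [MeasurableSingletonClass β] (μ : Measure α) [NullSingletonClass μ] {f : α → β}
    (hf : Measurable f) (hinj : Function.Injective f) : NullSingletonClass (μ.map f) where
  measure_singleton b := by
    rw [Measure.map_apply hf (measurableSet_singleton b)]
    exact (subsingleton_singleton.preimage hinj).measure_zero μ

theorem Measure.map_orderIso_eq_of_measure_Iic {α β : Type*} [LinearOrder α]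
    [TopologicalSpace α] [OrderTopology α] [MeasurableSpace α] [BorelSpace α] [LinearOrder β]
    [TopologicalSpace β] [OrderTopology β] [SecondCountableTopology β] [MeasurableSpace β]
    [BorelSpace β] {μ : Measure α} {ν : Measure β} [IsFiniteMeasure μ] (e : α ≃o β)
    (h : ∀ x, ν (Iic (e x)) = μ (Iic x)) : μ.map e = ν := by
  refine Measure.ext_of_Iic _ _ fun t => ?_
  rw [Measure.map_apply (f := e) e.toHomeomorph.measurable measurableSet_Iic,
    OrderIso.preimage_Iic, ← h, e.apply_symm_apply]

theorem measure_Iic_strictMono {α : Type*} [LinearOrder α] [TopologicalSpace α]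
    [OrderTopology α] [DenselyOrdered α] [MeasurableSpace α] [OpensMeasurableSpace α]
    (μ : Measure α) [IsFiniteMeasure μ] [μ.IsOpenPosMeasure] :
    StrictMono fun x => μ (Iic x) := by
  intro x y hxy
  calc μ (Iic x) < μ (Iic x) + μ (Ioo x y) :=
        ENNReal.lt_add_right (measure_ne_top μ _)
          (isOpen_Ioo.measure_ne_zero μ (nonempty_Ioo.2 hxy))
    _ = μ (Iic x ∪ Ioo x y) :=
        (measure_union ((Iic_disjoint_Ioi le_rfl).mono_right Ioo_subset_Ioi_self)
          measurableSet_Ioo).symm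
    _ ≤ μ (Iic y) := measure_mono (union_subset (Iic_subset_Iic.2 hxy.le) fun _ hz => hz.2.le)

end MeasureTheory

namespace unitInterval

section DistributionFunction

variable (μ : Measure I) [IsProbabilityMeasure μ]

noncomputable def cdf (x : I) : I :=
  ⟨μ.real (Iic x), measureReal_nonneg, measureReal_le_one⟩

theorem measure_Iic_eq_ofReal_cdf (x : I) : μ (Iic x) = ENNReal.ofReal (cdf μ x) :=
  (ofReal_measureReal (measure_ne_top μ _)).symm

theorem coe_cdf_eq_cdf_map (x : I) :
    (cdf μ x : ℝ) = ProbabilityTheory.cdf (μ.map (↑)) x := by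
  have := Measure.isProbabilityMeasure_map (μ := μ) measurable_subtype_coe.aemeasurable
  rw [ProbabilityTheory.cdf_eq_real, measureReal_def,
    Measure.map_apply measurable_subtype_coe measurableSet_Iic, preimage_subtype_val_Iic]
  rfl

theorem continuous_cdf [NullSingletonClass μ] : Continuous (cdf μ) := by
  have := μ.nullSingletonClass_map measurable_subtype_coe Subtype.val_injective
  have := Measure.isProbabilityMeasure_map (μ := μ) measurable_subtype_coe.aemeasurable
  have : NullSingletonClass (ProbabilityTheory.cdf (μ.map (↑))).measure := by
    rwa [ProbabilityTheory.measure_cdf]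
  refine continuous_induced_rng.2 ?_
  rw [show Subtype.val ∘ cdf μ = _ ∘ Subtype.val from funext (coe_cdf_eq_cdf_map μ)]
  exact (ProbabilityTheory.cdf _).continuous_of_nullSingletonClass.comp continuous_subtype_val

theorem strictMono_cdf [μ.IsOpenPosMeasure] : StrictMono (cdf μ) := fun _ _ hxy =>
  ENNReal.toReal_strict_mono (measure_ne_top μ _) (measure_Iic_strictMono μ hxy)

theorem surjective_cdf [NullSingletonClass μ] : Function.Surjective (cdf μ) := by
  have h0 : cdf μ ⊥ = ⊥ := Subtype.ext <| by simp [cdf, Iic_bot, measureReal_def]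
  have h1 : cdf μ ⊤ = ⊤ := Subtype.ext <| by simp [cdf, Iic_top]
  have := intermediate_value_univ ⊥ ⊤ (continuous_cdf μ)
  rw [h0, h1] at this
  exact fun t => this ⟨bot_le, le_top⟩

noncomputable def cdfOrderIso [NullSingletonClass μ] [μ.IsOpenPosMeasure] : I ≃o I :=
  StrictMono.orderIsoOfSurjective (cdf μ) (strictMono_cdf μ) (surjective_cdf μ)

end DistributionFunction

section MonotoneTransport

variable (ν μ : Measure I) [IsProbabilityMeasure μ] [IsProbabilityMeasure ν]
  [NullSingletonClass μ] [NullSingletonClass ν] [μ.IsOpenPosMeasure] [ν.IsOpenPosMeasure]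

noncomputable def monotoneTransport : I ≃o I :=
  (cdfOrderIso ν).trans (cdfOrderIso μ).symm

theorem measure_Iic_monotoneTransport (x : I) :
    μ (Iic (monotoneTransport ν μ x)) = ν (Iic x) := by
  have : cdf μ (monotoneTransport ν μ x) = cdf ν x :=
    (cdfOrderIso μ).apply_symm_apply (cdfOrderIso ν x)
  rw [measure_Iic_eq_ofReal_cdf, measure_Iic_eq_ofReal_cdf, this]

theorem map_monotoneTransport : ν.map (monotoneTransport ν μ) = μ :=
  Measure.map_orderIso_eq_of_measure_Iic _ (measure_Iic_monotoneTransport ν μ)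

end MonotoneTransport

theorem thickening_Iic_subset {r : ℝ} (x : I) :
    Metric.thickening r (Iic x) ⊆ {w | (w : ℝ) < x + r} := by
  intro w hw
  obtain ⟨u, hux, hwu⟩ := Metric.mem_thickening_iff.1 hw
  have : (w : ℝ) - u < r := (le_abs_self _).trans_lt hwu
  have hux : (u : ℝ) ≤ x := hux
  show (w : ℝ) < x + r
  linarith

theorem le_add_of_measure_Iic_eq {μ ν : Measure I} [IsFiniteMeasure μ] [μ.IsOpenPosMeasure]
    {r : ℝ} (hr : 0 < r) (H : ∀ U, MeasurableSet U → ν U ≤ μ (Metric.thickening r U))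
    {x y : I} (hxy : μ (Iic y) = ν (Iic x)) : (y : ℝ) ≤ x + r := by
  by_contra! hlt
  let z : I := ⟨(x + r + y) / 2, by linarith [x.2.1], by linarith [y.2.2]⟩
  have hzy : z < y := show (x + r + y) / 2 < (y : ℝ) by linarith
  have hthick : Metric.thickening r (Iic x) ⊆ Iic z := fun w hw => by
    have : (w : ℝ) < x + r := thickening_Iic_subset x hw
    exact show (w : ℝ) ≤ (x + r + y) / 2 by linarith
  have := calc μ (Iic y) = ν (Iic x) := hxy
    _ ≤ μ (Metric.thickening r (Iic x)) := H _ measurableSet_Iic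
    _ ≤ μ (Iic z) := measure_mono hthick
    _ < μ (Iic y) := measure_Iic_strictMono μ hzy
  exact this.false

theorem thickening_eq_univ {r : ℝ} (hr : 1 < r) {U : Set I} (hU : U.Nonempty) :
    Metric.thickening r U = univ := by
  obtain ⟨u, hu⟩ := hU
  exact eq_univ_of_forall fun w => Metric.mem_thickening_iff.2
    ⟨u, hu, (Real.dist_le_of_mem_Icc_01 w.2 u.2).trans_lt hr⟩

theorem le_matchDist {μ ν : Measure I} [IsProbabilityMeasure μ] [IsProbabilityMeasure ν]
    {d : ℝ} (h : ∀ r, 0 < r → (∀ U, MeasurableSet U →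
      μ U ≤ ν (Metric.thickening r U) ∧ ν U ≤ μ (Metric.thickening r U)) → d ≤ r) :
    d ≤ matchDist μ ν := by
  have hmem : ∀ U, MeasurableSet U →
      μ U ≤ ν (Metric.thickening 2 U) ∧ ν U ≤ μ (Metric.thickening 2 U) := by
    intro U _
    rcases U.eq_empty_or_nonempty with rfl | hU
    · simp
    · rw [thickening_eq_univ one_lt_two hU]
      exact ⟨prob_le_one.trans_eq measure_univ.symm, prob_le_one.trans_eq measure_univ.symm⟩
  refine le_csInf ⟨2, hmem⟩ fun r hr => h r ?_ hr
  by_contra! hr0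
  simpa [Metric.thickening_of_nonpos hr0] using (hr univ MeasurableSet.univ).1

end unitInterval

/-- The interval `[0,1]` admits continuous transport: for fully supported diffuse Borel
probability measures `μ, ν` on `[0,1]` there is a homeomorphism `h` of `[0,1]` with
`h⁎ν = μ` and `sup_x |h(x) − x| ≤ δ(μ,ν)`. -/
theorem stmt5 (μ ν : Measure I) [IsProbabilityMeasure μ] [IsProbabilityMeasure ν]
    (hdiffμ : ∀ x : I, μ {x} = 0) (hdiffν : ∀ x : I, ν {x} = 0)
    (hfullμ : ∀ U : Set I, IsOpen U → U.Nonempty → 0 < μ U)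
    (hfullν : ∀ U : Set I, IsOpen U → U.Nonempty → 0 < ν U) :
    ∃ h : I ≃ₜ I, Measure.map h ν = μ ∧ ∀ x : I, dist (h x) x ≤ matchDist μ ν := by
  have : NullSingletonClass μ := ⟨hdiffμ⟩
  have : NullSingletonClass ν := ⟨hdiffν⟩
  have : μ.IsOpenPosMeasure := ⟨fun U hU hne => (hfullμ U hU hne).ne'⟩
  have : ν.IsOpenPosMeasure := ⟨fun U hU hne => (hfullν U hU hne).ne'⟩
  let h := unitInterval.monotoneTransport ν μ
  refine ⟨h.toHomeomorph, unitInterval.map_monotoneTransport ν μ,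
    fun x => unitInterval.le_matchDist fun r hr hmatch => ?_⟩
  have hyx := unitInterval.le_add_of_measure_Iic_eq hr (fun U hU => (hmatch U hU).2)
    (unitInterval.measure_Iic_monotoneTransport ν μ x)
  have hxy := unitInterval.le_add_of_measure_Iic_eq hr (fun U hU => (hmatch U hU).1)
    (unitInterval.measure_Iic_monotoneTransport ν μ x).symm
  change dist (h x) x ≤ r
  rw [Subtype.dist_eq, Real.dist_eq, abs_sub_le_iff]
  exact ⟨by linarith, by linarith⟩
end
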